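/- arXiv:2505.05708 — 6 statements merged into one kernel-verified Lean document; each statement's English description precedes it below -/
import Mathlib

section
/- For any two adjacent integral allocations a, a' in I^m_b (i.e., with ℓ1 distance exactly 2), the fractional point p = (2/3)a + (1/3)a' satisfies ℓ1(p, a) = 2/3, ℓ1(p, a') = 4/3, and ℓ1(p, â) ≥ 2 for every other integral allocation â in I^m_b. -/
lemma same_sign_abs (x y : ℝ) (h : 0 ≤ x * y) :
    |(2*x + y)/3| = (2*|x| + |y|)/3 := by
  rcases le_or_gt 0 x with hx | hx
  · rcases le_or_gt 0 y with hy | hy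
    · rw [abs_of_nonneg hx, abs_of_nonneg hy, abs_of_nonneg (by linarith)]
    · have hx0 : x = 0 := by nlinarith
      subst hx0
      rw [abs_of_nonneg le_rfl, abs_of_neg hy, abs_of_neg (by linarith)]
      ring
  · have hy : y ≤ 0 := by nlinarith
    rw [abs_of_neg hx, abs_of_nonpos hy, abs_of_nonpos (by linarith)]
    ring

lemma int_prod_nonneg (x y : ℤ) (h : |x - y| ≤ 1) : 0 ≤ x * y := by
  have h' := abs_le.mp h
  rcases lt_trichotomy x 0 with hx | hx | hx
  · have hy : y ≤ 0 := by omega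
    nlinarith
  · simp [hx]
  · have hy : 0 ≤ y := by omega
    exact mul_nonneg (le_of_lt hx) hy

lemma l1_ge_two {m : ℕ} (a c : Fin m → ℕ)
    (h : ∑ j, (a j : ℤ) = ∑ j, (c j : ℤ)) (hne : c ≠ a) :
    2 ≤ ∑ j, |(a j : ℤ) - (c j : ℤ)| := by
  have hmod : (∑ j, |(a j : ℤ) - (c j : ℤ)|) % 2
      = (∑ j, ((a j : ℤ) - (c j : ℤ))) % 2 := by
    rw [Finset.sum_int_mod, Finset.sum_int_mod (f := fun j => (a j : ℤ) - (c j : ℤ))]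
    congr 1
    refine Finset.sum_congr rfl (fun j _ => ?_)
    rcases abs_cases ((a j : ℤ) - (c j : ℤ)) with ⟨h1, _⟩ | ⟨h1, _⟩ <;> rw [h1] <;> omega
  have hsum0 : (∑ j, ((a j : ℤ) - (c j : ℤ))) = 0 := by
    rw [Finset.sum_sub_distrib, h, sub_self]
  rw [hsum0] at hmod
  obtain ⟨j, hj⟩ := Function.ne_iff.mp hne
  have h1 : 1 ≤ |(a j : ℤ) - (c j : ℤ)| := by
    have hne' : (a j : ℤ) ≠ (c j : ℤ) := by exact_mod_cast fun hh => hj (by exact_mod_cast hh.symm)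
    have := abs_pos.mpr (sub_ne_zero.mpr hne')
    omega
  have hle : |(a j : ℤ) - (c j : ℤ)| ≤ ∑ k, |(a k : ℤ) - (c k : ℤ)| :=
    Finset.single_le_sum (f := fun k => |(a k : ℤ) - (c k : ℤ)|)
      (fun k _ => abs_nonneg _) (Finset.mem_univ j)
  omega

/-- For adjacent integral allocations `a, a'` (ℓ1 distance 2), the point
`p = (2/3)a + (1/3)a'` has ℓ1 distance 2/3 to `a`, 4/3 to `a'`, and at least 2
to every other integral allocation. -/
theorem stmt1 (m b : ℕ) (hm : 0 < m) (hb : 0 < b) (a a' : Fin m → ℕ)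
    (ha : ∑ j, a j = b) (ha' : ∑ j, a' j = b)
    (hadj : ∑ j, |(a j : ℝ) - (a' j : ℝ)| = 2) :
    (∑ j, |((2/3 : ℝ) * (a j : ℝ) + (1/3 : ℝ) * (a' j : ℝ)) - (a j : ℝ)| = 2/3) ∧
    (∑ j, |((2/3 : ℝ) * (a j : ℝ) + (1/3 : ℝ) * (a' j : ℝ)) - (a' j : ℝ)| = 4/3) ∧
    (∀ c : Fin m → ℕ, ∑ j, c j = b → c ≠ a → c ≠ a' →
      2 ≤ ∑ j, |((2/3 : ℝ) * (a j : ℝ) + (1/3 : ℝ) * (a' j : ℝ)) - (c j : ℝ)|) := by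
  -- integer version of hadj
  have hadjZ : ∑ j, |(a j : ℤ) - (a' j : ℤ)| = 2 := by
    have : ((∑ j, |(a j : ℤ) - (a' j : ℤ)| : ℤ) : ℝ) = ∑ j, |(a j : ℝ) - (a' j : ℝ)| := by
      push_cast; ring
    exact_mod_cast this.trans hadj
  have hsumZ : ∑ j, (a j : ℤ) = ∑ j, (a' j : ℤ) := by
    have h1 : ((∑ j, a j : ℕ) : ℤ) = ((∑ j, a' j : ℕ) : ℤ) := by rw [ha, ha']
    push_cast at h1
    exact h1
  -- each coordinate differs by at most 1
  have hd1 : ∀ j, |(a j : ℤ) - (a' j : ℤ)| ≤ 1 := by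
    intro j
    by_contra hcon
    push_neg at hcon
    have hle : |(a j : ℤ) - (a' j : ℤ)| ≤ ∑ k, |(a k : ℤ) - (a' k : ℤ)| :=
      Finset.single_le_sum (f := fun k => |(a k : ℤ) - (a' k : ℤ)|)
        (fun k _ => abs_nonneg _) (Finset.mem_univ j)
    have heq2 : |(a j : ℤ) - (a' j : ℤ)| = 2 := by omega
    have hrest : ∑ k ∈ Finset.univ \ {j}, |(a k : ℤ) - (a' k : ℤ)| = 0 := by
      have := Finset.sum_eq_sum_sdiff_singleton_add (Finset.mem_univ j)
        (fun k => |(a k : ℤ) - (a' k : ℤ)|)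
      omega
    have hzero : ∀ k ∈ Finset.univ \ {j}, ((a k : ℤ) - (a' k : ℤ)) = 0 := by
      intro k hk
      have := (Finset.sum_eq_zero_iff_of_nonneg (fun k _ => abs_nonneg _)).mp hrest k hk
      exact abs_eq_zero.mp this
    have hsum0 : (∑ k, ((a k : ℤ) - (a' k : ℤ))) = 0 := by
      rw [Finset.sum_sub_distrib, hsumZ, sub_self]
    have hsplit := Finset.sum_eq_sum_sdiff_singleton_add (Finset.mem_univ j)
      (fun k => (a k : ℤ) - (a' k : ℤ))
    rw [Finset.sum_eq_zero hzero] at hsplit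
    simp at hsplit
    have hda : (a j : ℤ) - (a' j : ℤ) = 2 ∨ (a j : ℤ) - (a' j : ℤ) = -2 := by
      rcases abs_cases ((a j : ℤ) - (a' j : ℤ)) with ⟨h1, _⟩ | ⟨h1, _⟩ <;> omega
    omega
  refine ⟨?_, ?_, ?_⟩
  · have hterm : ∀ j, |((2/3 : ℝ) * (a j : ℝ) + (1/3 : ℝ) * (a' j : ℝ)) - (a j : ℝ)|
        = (1/3) * |(a j : ℝ) - (a' j : ℝ)| := by
      intro j
      rw [show ((2/3 : ℝ) * (a j : ℝ) + (1/3 : ℝ) * (a' j : ℝ)) - (a j : ℝ)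
          = (-(1/3)) * ((a j : ℝ) - (a' j : ℝ)) by ring, abs_mul]
      norm_num
    rw [Finset.sum_congr rfl (fun j _ => hterm j), ← Finset.mul_sum, hadj]
    norm_num
  · have hterm : ∀ j, |((2/3 : ℝ) * (a j : ℝ) + (1/3 : ℝ) * (a' j : ℝ)) - (a' j : ℝ)|
        = (2/3) * |(a j : ℝ) - (a' j : ℝ)| := by
      intro j
      rw [show ((2/3 : ℝ) * (a j : ℝ) + (1/3 : ℝ) * (a' j : ℝ)) - (a' j : ℝ)
          = (2/3) * ((a j : ℝ) - (a' j : ℝ)) by ring, abs_mul]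
      norm_num
    rw [Finset.sum_congr rfl (fun j _ => hterm j), ← Finset.mul_sum, hadj]
    norm_num
  · intro c hc hca hca'
    -- pointwise identity
    have hterm : ∀ j, |((2/3 : ℝ) * (a j : ℝ) + (1/3 : ℝ) * (a' j : ℝ)) - (c j : ℝ)|
        = (2 * |(a j : ℝ) - (c j : ℝ)| + |(a' j : ℝ) - (c j : ℝ)|) / 3 := by
      intro j
      have hprod : 0 ≤ ((a j : ℤ) - (c j : ℤ)) * ((a' j : ℤ) - (c j : ℤ)) := by
        apply int_prod_nonneg
        have heq : ((a j : ℤ) - (c j : ℤ)) - ((a' j : ℤ) - (c j : ℤ))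
            = (a j : ℤ) - (a' j : ℤ) := by ring
        rw [heq]
        exact hd1 j
      have hprodR : 0 ≤ ((a j : ℝ) - (c j : ℝ)) * ((a' j : ℝ) - (c j : ℝ)) := by
        exact_mod_cast hprod
      have := same_sign_abs ((a j : ℝ) - (c j : ℝ)) ((a' j : ℝ) - (c j : ℝ)) hprodR
      rw [show ((2/3 : ℝ) * (a j : ℝ) + (1/3 : ℝ) * (a' j : ℝ)) - (c j : ℝ)
          = (2 * ((a j : ℝ) - (c j : ℝ)) + ((a' j : ℝ) - (c j : ℝ))) / 3 by ring]
      exact this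
    rw [Finset.sum_congr rfl (fun j _ => hterm j)]
    have hcsZ : ∑ j, (c j : ℤ) = ∑ j, (a j : ℤ) := by
      have h1 : ((∑ j, c j : ℕ) : ℤ) = ((∑ j, a j : ℕ) : ℤ) := by rw [ha, hc]
      push_cast at h1
      exact h1
    have hSa : (2 : ℤ) ≤ ∑ j, |(a j : ℤ) - (c j : ℤ)| := l1_ge_two a c hcsZ.symm hca
    have hSb : (2 : ℤ) ≤ ∑ j, |(a' j : ℤ) - (c j : ℤ)| :=
      l1_ge_two a' c (hsumZ.symm.trans hcsZ.symm) hca'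
    have hSaR : (2 : ℝ) ≤ ∑ j, |(a j : ℝ) - (c j : ℝ)| := by
      have : ((∑ j, |(a j : ℤ) - (c j : ℤ)| : ℤ) : ℝ) = ∑ j, |(a j : ℝ) - (c j : ℝ)| := by
        push_cast; ring
      rw [← this]
      exact_mod_cast hSa
    have hSbR : (2 : ℝ) ≤ ∑ j, |(a' j : ℝ) - (c j : ℝ)| := by
      have : ((∑ j, |(a' j : ℤ) - (c j : ℤ)| : ℤ) : ℝ) = ∑ j, |(a' j : ℝ) - (c j : ℝ)| := by
        push_cast; ring
      rw [← this]
      exact_mod_cast hSb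
    have hsplit : ∑ j, (2 * |(a j : ℝ) - (c j : ℝ)| + |(a' j : ℝ) - (c j : ℝ)|) / 3
        = (2 * ∑ j, |(a j : ℝ) - (c j : ℝ)| + ∑ j, |(a' j : ℝ) - (c j : ℝ)|) / 3 := by
      rw [← Finset.sum_div, Finset.sum_add_distrib, ← Finset.mul_sum]
    rw [hsplit]
    linarith
end

section
/- For any profile of votes in the simplex S^m_b and any phantom system {f_0,...,f_n} with each f_k continuous and non-decreasing, f_k(0)=0, and f_k(1) ≥ b·(n-k)/n, there exists a time t* ∈ [0,1] such that the sum over alternatives j of the median of (p_{1,j},...,p_{n,j}, f_0(t*),...,f_n(t*)) equals b. -/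
/-!
The sum of medians `g t` is continuous because the median of `2n+1` reals is 1-Lipschitz for
the sup distance. At `t = 0` all `n+1` phantoms are at `0`, so every median is `≤ 0` and
`g 0 ≤ b`. At `t = 1`, let `d_j` be the number of voters strictly above the `j`-th median.
The phantoms `f_0, …, f_{n-d_j}` are all `≥ b d_j / n`, so if the median were below
`b d_j / n`, then `d_j + (n - d_j + 1) > n` values would exceed it; hence median `j` is
`≥ b d_j / n`. If `g 1 < b`, every voter is above the median of some alternative (its votes
sum to `b`), so `∑ d_j ≥ n` and `g 1 ≥ b`, a contradiction. The intermediate value theorem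
concludes.
-/

/-- The median of `2n+1` real numbers: the `(n+1)`-st smallest. -/
noncomputable def medianR (n : ℕ) (v : Fin (2*n+1) → ℝ) : ℝ :=
  (Multiset.sort (Multiset.map v Finset.univ.val) (· ≤ ·)).getD n 0

/-- Merge `n` votes and `n+1` phantoms into one vector of `2n+1` values. -/
def mergeVR (n : ℕ) (x : Fin n → ℝ) (y : Fin (n+1) → ℝ) : Fin (2*n+1) → ℝ :=
  fun i => if h : (i : ℕ) < n then x ⟨i, h⟩
           else y ⟨(i : ℕ) - n, by have := i.isLt; omega⟩

open Finset

namespace List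
variable {α : Type*} [LinearOrder α] {s : List α} {k : ℕ} {x : α}

theorem countP_le_le_of_lt_getElem (hs : s.Pairwise (· ≤ ·)) (hk : k < s.length)
    (hx : x < s[k]) : s.countP (· ≤ x) ≤ k := by
  have hdrop : (s.drop k).countP (· ≤ x) = 0 := by
    refine countP_eq_zero.mpr fun y hy => ?_
    obtain ⟨i, hi, rfl⟩ := mem_iff_getElem.mp hy
    have := hs.rel_get_of_le (a := ⟨k, hk⟩) (b := ⟨k + i, by simp at hi; omega⟩) (by simp)
    simpa using hx.trans_le this
  rw [← take_append_drop k s, countP_append, hdrop]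
  exact countP_le_length.trans (length_take_le _ _)

theorem lt_countP_le_of_getElem_le (hs : s.Pairwise (· ≤ ·)) (hk : k < s.length)
    (hx : s[k] ≤ x) : k < s.countP (· ≤ x) := by
  have htake : (s.take (k + 1)).countP (· ≤ x) = k + 1 := by
    rw [countP_eq_length.mpr, length_take]
    · omega
    intro y hy
    obtain ⟨i, hi, rfl⟩ := mem_iff_getElem.mp hy
    have := hs.rel_get_of_le (a := ⟨i, by simp at hi; omega⟩) (b := ⟨k, hk⟩)
      (by simp at hi ⊢; omega)
    simpa using this.trans hx
  have := (take_sublist (k + 1) s).countP_le (p := (· ≤ x))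
  omega

end List

theorem Finset.card_filter_eq_countP_sort {ι α : Type*} [Fintype ι] [LinearOrder α]
    (v : ι → α) (P : α → Prop) [DecidablePred P] :
    #{i | P (v i)} = (Multiset.sort (Multiset.map v univ.val) (· ≤ ·)).countP (P ·) := by
  rw [← Multiset.coe_countP, Multiset.sort_eq, Multiset.countP_map]
  rfl

section Median
variable {n : ℕ}

theorem medianR_eq_getElem (v : Fin (2*n+1) → ℝ) :
    medianR n v = (Multiset.sort (Multiset.map v univ.val) (· ≤ ·))[n]'(by simp; omega) :=
  List.getD_eq_getElem _ _ _

theorem lt_card_le_medianR (v : Fin (2*n+1) → ℝ) : n < #{i | v i ≤ medianR n v} := by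
  rw [card_filter_eq_countP_sort v (· ≤ medianR n v)]
  exact List.lt_countP_le_of_getElem_le (Multiset.pairwise_sort _ _) (by simp; omega)
    (medianR_eq_getElem v).ge

theorem medianR_le_of_lt_card (v : Fin (2*n+1) → ℝ) {x : ℝ} (h : n < #{i | v i ≤ x}) :
    medianR n v ≤ x := by
  by_contra! hx
  rw [card_filter_eq_countP_sort v (· ≤ x)] at h
  rw [medianR_eq_getElem] at hx
  exact h.not_ge (List.countP_le_le_of_lt_getElem (Multiset.pairwise_sort _ _) _ hx)

theorem card_medianR_lt_le (v : Fin (2*n+1) → ℝ) : #{i | medianR n v < v i} ≤ n := by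
  have := card_filter_add_card_filter_not (s := univ) (fun i => v i ≤ medianR n v)
  simp only [not_le, card_univ, Fintype.card_fin] at this
  have := lt_card_le_medianR v
  omega

theorem lipschitzWith_medianR : LipschitzWith 1 (medianR n) := by
  refine LipschitzWith.of_le_add fun v w => medianR_le_of_lt_card v ?_
  refine (lt_card_le_medianR w).trans_le (card_le_card fun i => ?_)
  simp only [mem_filter, mem_univ, true_and]
  intro hi
  have := (Real.dist_eq _ _ ▸ dist_le_pi_dist v w i)
  linarith [le_abs_self (v i - w i)]

end Median

section Merge
variable {n : ℕ}

theorem mergeVR_eq_append (x : Fin n → ℝ) (y : Fin (n+1) → ℝ) :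
    mergeVR n x y = Fin.append x y ∘ Fin.cast (by omega) := by
  funext i
  by_cases h : (i : ℕ) < n <;> simp [mergeVR, h, Fin.append, Fin.addCases] <;> rfl

theorem sum_mergeVR {M : Type*} [AddCommMonoid M] (φ : ℝ → M) (x : Fin n → ℝ)
    (y : Fin (n+1) → ℝ) :
    ∑ i, φ (mergeVR n x y i) = ∑ i, φ (x i) + ∑ k, φ (y k) := by
  calc ∑ i, φ (mergeVR n x y i) = ∑ i : Fin (n + (n+1)), φ (Fin.append x y i) := by
        rw [mergeVR_eq_append]
        exact Fintype.sum_equiv (finCongr (by omega)) _ _ fun i => rfl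
    _ = ∑ i, φ (x i) + ∑ k, φ (y k) := by simp [Fin.sum_univ_add]

theorem card_filter_mergeVR (P : ℝ → Prop) [DecidablePred P] (x : Fin n → ℝ)
    (y : Fin (n+1) → ℝ) : #{i | P (mergeVR n x y i)} = #{i | P (x i)} + #{k | P (y k)} := by
  simp only [card_filter]
  exact sum_mergeVR (fun r => if P r then 1 else 0) x y

theorem continuous_mergeVR (x : Fin n → ℝ) : Continuous (mergeVR n x) := by
  refine continuous_pi fun i => ?_
  unfold mergeVR
  split <;> fun_prop

theorem medianR_mergeVR_le_of_forall_le (x : Fin n → ℝ) {y : Fin (n+1) → ℝ} {c : ℝ}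
    (hy : ∀ k, y k ≤ c) : medianR n (mergeVR n x y) ≤ c := by
  refine medianR_le_of_lt_card _ ?_
  rw [card_filter_mergeVR (· ≤ c), filter_true_of_mem fun k _ => hy k]
  simp only [card_univ, Fintype.card_fin]
  omega

end Merge

section Phantoms
variable {n : ℕ} {b : ℝ}

theorem le_medianR_mergeVR (hb : 0 ≤ b) (q : Fin n → ℝ) {y : Fin (n+1) → ℝ}
    (hy : ∀ k : Fin (n+1), b * (n - (k : ℕ)) / n ≤ y k) :
    b * #{i | medianR n (mergeVR n q y) < q i} / n ≤ medianR n (mergeVR n q y) := by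
  set med := medianR n (mergeVR n q y)
  set d := #{i | med < q i}
  by_contra! hlt
  have hd : d ≤ n := (card_filter_le _ _).trans_eq (by simp)
  have hphantoms : n - d < #{k | med < y k} := by
    refine Nat.lt_of_lt_of_le ?_ (card_le_card (s := Iic ⟨n - d, by omega⟩) ?_)
    · simp
    intro k hk
    simp only [mem_Iic, Fin.le_def, mem_filter, mem_univ, true_and] at hk ⊢
    refine hlt.trans_le (le_trans ?_ (hy k))
    gcongr
    rw [le_sub_iff_add_le, ← Nat.cast_add, Nat.cast_le]
    omega
  have := card_medianR_lt_le (mergeVR n q y)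
  rw [card_filter_mergeVR (med < ·)] at this
  omega

theorem le_sum_medianR_mergeVR {m : ℕ} (hn : 0 < n) (hb : 0 ≤ b) (p : Fin n → Fin m → ℝ)
    (hp : ∀ i, ∑ j, p i j = b) {y : Fin (n+1) → ℝ}
    (hy : ∀ k : Fin (n+1), b * (n - (k : ℕ)) / n ≤ y k) :
    b ≤ ∑ j, medianR n (mergeVR n (fun i => p i j) y) := by
  set med := fun j => medianR n (mergeVR n (fun i => p i j) y)
  by_contra! hlt
  have hvoter : ∀ i, ∃ j, med j < p i j := fun i => by
    obtain ⟨j, -, hj⟩ := exists_lt_of_sum_lt (hlt.trans_eq (hp i).symm)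
    exact ⟨j, hj⟩
  have hcount : n ≤ ∑ j, #{i | med j < p i j} := by
    have := sum_card_bipartiteAbove_eq_sum_card_bipartiteBelow
      (s := univ) (t := univ) (fun j i => med j < p i j)
    simp only [bipartiteAbove, bipartiteBelow] at this
    rw [this]
    calc n = ∑ _i : Fin n, 1 := by simp
      _ ≤ _ := sum_le_sum fun i _ => card_pos.mpr <| by
          obtain ⟨j, hj⟩ := hvoter i
          exact ⟨j, by simpa using hj⟩
  have hn' : (0 : ℝ) < n := by exact_mod_cast hn
  refine hlt.not_ge ?_
  calc b = b * n / n := by field_simp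
    _ ≤ b * (∑ j, #{i | med j < p i j} : ℕ) / n := by gcongr
    _ = ∑ j, b * #{i | med j < p i j} / n := by rw [Nat.cast_sum, mul_sum, sum_div]
    _ ≤ ∑ j, med j := sum_le_sum fun j _ => le_medianR_mergeVR hb _ hy

end Phantoms

theorem stmt2_general (n m b : ℕ) (hn : 0 < n)
    (p : Fin n → Fin m → ℝ)
    (hp2 : ∀ i, ∑ j, p i j = b)
    (f : Fin (n+1) → ℝ → ℝ)
    (hcont : ∀ k, ContinuousOn (f k) (Set.Icc 0 1))
    (h0 : ∀ k, f k 0 = 0)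
    (h1 : ∀ k : Fin (n+1), (b : ℝ) * ((n : ℝ) - (k : ℕ)) / n ≤ f k 1) :
    ∃ t ∈ Set.Icc (0:ℝ) 1,
      ∑ j, medianR n (mergeVR n (fun i => p i j) (fun k => f k t)) = b := by
  have hg : ContinuousOn (fun t => ∑ j, medianR n (mergeVR n (fun i => p i j) (fun k => f k t)))
      (Set.Icc 0 1) :=
    continuousOn_finsetSum _ fun j _ =>
      (lipschitzWith_medianR.continuous.comp (continuous_mergeVR _)).comp_continuousOn
        (continuousOn_pi.mpr hcont)
  have hg0 : ∑ j, medianR n (mergeVR n (fun i => p i j) (fun k => f k 0)) ≤ b :=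
    (sum_nonpos fun j _ => medianR_mergeVR_le_of_forall_le _ fun k => (h0 k).le).trans
      b.cast_nonneg
  have hg1 := le_sum_medianR_mergeVR hn b.cast_nonneg p hp2 h1
  exact intermediate_value_Icc zero_le_one hg ⟨hg0, hg1⟩

/-- Existence of a normalization time for any moving-phantom system. -/
theorem stmt2 (n m b : ℕ) (hn : 0 < n) (hm : 2 ≤ m) (hb : 0 < b)
    (p : Fin n → Fin m → ℝ)
    (hp1 : ∀ i j, 0 ≤ p i j ∧ p i j ≤ b)
    (hp2 : ∀ i, ∑ j, p i j = b)
    (f : Fin (n+1) → ℝ → ℝ)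
    (hcont : ∀ k, ContinuousOn (f k) (Set.Icc 0 1))
    (hmono : ∀ k, MonotoneOn (f k) (Set.Icc 0 1))
    (hrange : ∀ k, ∀ t ∈ Set.Icc (0:ℝ) 1, f k t ∈ Set.Icc (0:ℝ) b)
    (h0 : ∀ k, f k 0 = 0)
    (h1 : ∀ k : Fin (n+1), (b : ℝ) * ((n : ℝ) - (k : ℕ)) / n ≤ f k 1) :
    ∃ t ∈ Set.Icc (0:ℝ) 1,
      ∑ j, medianR n (mergeVR n (fun i => p i j) (fun k => f k t)) = b :=
  stmt2_general n m b hn p hp2 f hcont h0 h1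
end

section
/- For a phantom system {f_0,...,f_n} as above, the sum over alternatives of the median of the votes and phantoms at a fixed time t is a non-decreasing function of t; consequently, although the normalization time t* may not be unique, the resulting vector of medians at any normalization time is unique. -/
/-!
The `k`-th smallest entry of a vector is at most `x` exactly when more than `k` entries are at
most `x`. Raising entries can only lower that count, so the median is monotone in its inputs.
As the phantoms move up with time, every coordinate of the median vector is non-decreasing in
time, hence so is their sum; and two normalization times `t₁ ≤ t₂` give coordinatewise
`M t₁ ≤ M t₂` with equal sums, which forces `M t₁ = M t₂`.
-/

open Finset

theorem List.Pairwise.getElem_le_iff_lt_countP {α : Type*} [LinearOrder α] {l : List α}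
    (hl : l.Pairwise (· ≤ ·)) (x : α) {k : ℕ} (hk : k < l.length) :
    l[k] ≤ x ↔ k < l.countP (· ≤ x) := by
  have hmono : ∀ {i j} (hi : i < l.length) (hj : j < l.length), i ≤ j → l[i] ≤ l[j] :=
    fun hi hj hij => hl.rel_get_of_le (a := ⟨_, hi⟩) (b := ⟨_, hj⟩) hij
  constructor
  · intro h
    have hprefix : (l.take (k + 1)).countP (· ≤ x) = k + 1 := by
      rw [List.countP_eq_length.mpr, List.length_take_of_le hk]
      intro a ha
      obtain ⟨i, hi, rfl⟩ := List.mem_iff_getElem.mp ha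
      simp only [List.length_take] at hi
      simpa [List.getElem_take] using (hmono _ hk (by omega)).trans h
    have := (List.take_sublist (k + 1) l).countP_le (p := (· ≤ x))
    omega
  · intro h
    by_contra! hx
    have hsuffix : (l.drop k).countP (· ≤ x) = 0 := by
      rw [List.countP_eq_zero]
      intro a ha
      obtain ⟨i, hi, rfl⟩ := List.mem_iff_getElem.mp ha
      simp only [List.length_drop] at hi
      simpa [List.getElem_drop] using hx.trans_le (hmono hk (by omega) (by omega))
    have hsplit := congrArg (List.countP (· ≤ x)) (List.take_append_drop k l)
    have := List.countP_le_length (p := (· ≤ x)) (l := l.take k)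
    simp only [List.countP_append, List.length_take] at hsplit this
    omega

theorem getElem_sort_map_le_iff {ι α : Type*} [Fintype ι] [LinearOrder α] (v : ι → α) (x : α)
    {k : ℕ} (hk : k < (Multiset.sort (univ.val.map v) (· ≤ ·)).length) :
    (Multiset.sort (univ.val.map v) (· ≤ ·))[k] ≤ x ↔ k < #{i | v i ≤ x} := by
  rw [(Multiset.pairwise_sort _ _).getElem_le_iff_lt_countP x hk, ← Multiset.coe_countP,
    Multiset.sort_eq, Multiset.countP_map]
  rfl

theorem medianR_le_iff (n : ℕ) (v : Fin (2 * n + 1) → ℝ) (x : ℝ) :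
    medianR n v ≤ x ↔ n < #{i | v i ≤ x} := by
  have hn : n < (Multiset.sort (univ.val.map v) (· ≤ ·)).length := by
    rw [Multiset.length_sort, Multiset.card_map, card_val, card_fin]; omega
  rw [medianR, List.getD_eq_getElem _ _ hn, getElem_sort_map_le_iff]

theorem medianR_mono (n : ℕ) : Monotone (medianR n) := fun v w hvw => by
  rw [medianR_le_iff]
  refine ((medianR_le_iff n w _).mp le_rfl).trans_le (card_le_card fun i => ?_)
  simpa only [mem_filter_univ] using (hvw i).trans

theorem mergeVR_mono_right (n : ℕ) (x : Fin n → ℝ) : Monotone (mergeVR n x) :=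
  fun y y' hy i => by
    unfold mergeVR
    split_ifs
    exacts [le_rfl, hy _]

theorem eq_of_sum_eq_of_monotoneOn {ι β γ : Type*} [Fintype ι] [LinearOrder β]
    [AddCommMonoid γ] [PartialOrder γ] [IsOrderedCancelAddMonoid γ] {F : β → ι → γ} {s : Set β}
    (hF : ∀ j, MonotoneOn (F · j) s) {t₁ t₂ : β} (ht₁ : t₁ ∈ s) (ht₂ : t₂ ∈ s)
    (hsum : ∑ j, F t₁ j = ∑ j, F t₂ j) : F t₁ = F t₂ := by
  wlog h : t₁ ≤ t₂ generalizing t₁ t₂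
  · exact (this ht₂ ht₁ hsum.symm (le_of_not_ge h)).symm
  funext j
  exact (sum_eq_sum_iff_of_le fun j _ => hF j ht₁ ht₂ h).mp hsum j (mem_univ j)

theorem stmt3_general (n m b : ℕ)
    (p : Fin n → Fin m → ℝ)
    (f : Fin (n+1) → ℝ → ℝ)
    (hmono : ∀ k, MonotoneOn (f k) (Set.Icc 0 1))
    (M : ℝ → Fin m → ℝ)
    (hM : ∀ t j, M t j = medianR n (mergeVR n (fun i => p i j) (fun k => f k t))) :
    (∀ t ∈ Set.Icc (0:ℝ) 1, ∀ t' ∈ Set.Icc (0:ℝ) 1, t ≤ t' →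
        ∑ j, M t j ≤ ∑ j, M t' j) ∧
    (∀ t1 ∈ Set.Icc (0:ℝ) 1, ∀ t2 ∈ Set.Icc (0:ℝ) 1,
        ∑ j, M t1 j = b → ∑ j, M t2 j = b → ∀ j, M t1 j = M t2 j) := by
  have hMmono : ∀ j, MonotoneOn (M · j) (Set.Icc 0 1) := fun j t ht t' ht' htt' => by
    simp only [hM]
    exact medianR_mono n (mergeVR_mono_right n _ fun k => hmono k ht ht' htt')
  refine ⟨fun t ht t' ht' htt' => sum_le_sum fun j _ => hMmono j ht ht' htt', ?_⟩
  intro t1 ht1 t2 ht2 hs1 hs2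
  exact congrFun (eq_of_sum_eq_of_monotoneOn hMmono ht1 ht2 (hs1.trans hs2.symm))

/-- The sum of medians is non-decreasing in time, and the vector of medians
at any normalization time is unique. -/
theorem stmt3 (n m b : ℕ) (hn : 0 < n) (hm : 2 ≤ m) (hb : 0 < b)
    (p : Fin n → Fin m → ℝ)
    (hp1 : ∀ i j, 0 ≤ p i j ∧ p i j ≤ b)
    (hp2 : ∀ i, ∑ j, p i j = b)
    (f : Fin (n+1) → ℝ → ℝ)
    (hcont : ∀ k, ContinuousOn (f k) (Set.Icc 0 1))
    (hmono : ∀ k, MonotoneOn (f k) (Set.Icc 0 1))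
    (hrange : ∀ k, ∀ t ∈ Set.Icc (0:ℝ) 1, f k t ∈ Set.Icc (0:ℝ) b)
    (h0 : ∀ k, f k 0 = 0)
    (h1 : ∀ k : Fin (n+1), (b : ℝ) * ((n : ℝ) - (k : ℕ)) / n ≤ f k 1)
    (M : ℝ → Fin m → ℝ)
    (hM : ∀ t j, M t j = medianR n (mergeVR n (fun i => p i j) (fun k => f k t))) :
    (∀ t ∈ Set.Icc (0:ℝ) 1, ∀ t' ∈ Set.Icc (0:ℝ) 1, t ≤ t' →
        ∑ j, M t j ≤ ∑ j, M t' j) ∧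
    (∀ t1 ∈ Set.Icc (0:ℝ) 1, ∀ t2 ∈ Set.Icc (0:ℝ) 1,
        ∑ j, M t1 j = b → ∑ j, M t2 j = b → ∀ j, M t1 j = M t2 j) :=
  stmt3_general n m b p f hmono M hM
end

section
/- No integral budget-aggregation mechanism satisfies truthfulness, EJR+, and range-respect. In particular, for n=3 voters, m=4 alternatives, and budget b=3, no function A : (I^4_3)^3 → I^4_3 is simultaneously truthful, EJR+, and range-respecting. -/
def I43 : Type := {v : Fin 4 → ℕ // ∑ j, v j = 3}

def mk4 (a b c d : ℕ) (h : a + b + c + d = 3) : I43 :=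
  ⟨![a, b, c, d], by simp [Fin.sum_univ_four]; omega⟩

@[simp] lemma mk4_0 (a b c d h) : (mk4 a b c d h).1 0 = a := rfl
@[simp] lemma mk4_1 (a b c d h) : (mk4 a b c d h).1 1 = b := rfl
@[simp] lemma mk4_2 (a b c d h) : (mk4 a b c d h).1 2 = c := rfl
@[simp] lemma mk4_3 (a b c d h) : (mk4 a b c d h).1 3 = d := rfl

lemma l1_ov (u v : I43) :
    ∑ j, |((u.1 j : ℤ)) - v.1 j| = 6 - 2 * ∑ j, ((min (u.1 j) (v.1 j) : ℕ) : ℤ) := by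
  have hu := u.2; have hv := v.2
  have key : ∀ a b : ℕ, |((a : ℤ)) - b| = (a : ℤ) + b - 2 * ((min a b : ℕ) : ℤ) := by
    intro a b
    rcases le_total a b with h | h
    · rw [min_eq_left h, abs_of_nonpos (by omega)]; push_cast; ring
    · rw [min_eq_right h, abs_of_nonneg (by omega)]; push_cast; ring
  simp only [Fin.sum_univ_four] at hu hv ⊢
  rw [key, key, key, key]
  push_cast
  omega


set_option synthInstance.maxSize 1000
set_option maxHeartbeats 1000000

lemma fval (x : ℕ) (h : x < 4) : ((⟨x, h⟩ : Fin 4) : ℕ) = x := rfl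

def PB : Fin 3 → I43 := ![mk4 2 0 0 1 rfl, mk4 1 0 2 0 rfl, mk4 1 2 0 0 rfl]
@[simp] lemma PB_0 : PB 0 = mk4 2 0 0 1 rfl := rfl
@[simp] lemma PB_1 : PB 1 = mk4 1 0 2 0 rfl := rfl
@[simp] lemma PB_2 : PB 2 = mk4 1 2 0 0 rfl := rfl

def Q1 : Fin 3 → I43 := ![mk4 2 0 0 1 rfl, mk4 0 0 3 0 rfl, mk4 1 2 0 0 rfl]
@[simp] lemma Q1_0 : Q1 0 = mk4 2 0 0 1 rfl := rfl
@[simp] lemma Q1_1 : Q1 1 = mk4 0 0 3 0 rfl := rfl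
@[simp] lemma Q1_2 : Q1 2 = mk4 1 2 0 0 rfl := rfl

def Q2 : Fin 3 → I43 := ![mk4 0 0 0 3 rfl, mk4 1 0 2 0 rfl, mk4 1 2 0 0 rfl]
@[simp] lemma Q2_0 : Q2 0 = mk4 0 0 0 3 rfl := rfl
@[simp] lemma Q2_1 : Q2 1 = mk4 1 0 2 0 rfl := rfl
@[simp] lemma Q2_2 : Q2 2 = mk4 1 2 0 0 rfl := rfl

def Q3 : Fin 3 → I43 := ![mk4 2 0 0 1 rfl, mk4 1 0 2 0 rfl, mk4 0 3 0 0 rfl]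
@[simp] lemma Q3_0 : Q3 0 = mk4 2 0 0 1 rfl := rfl
@[simp] lemma Q3_1 : Q3 1 = mk4 1 0 2 0 rfl := rfl
@[simp] lemma Q3_2 : Q3 2 = mk4 0 3 0 0 rfl := rfl

lemma candPB : ∀ b0 b1 b2 b3 : Fin 4,
    (b0:ℕ) + (b1:ℕ) + (b2:ℕ) + (b3:ℕ) = 3 → ((b0:ℕ) ≤ 2 ∨ (b0:ℕ) ≤ 1 ∨ (b0:ℕ) ≤ 1) → ¬(((b0:ℕ) < 2 ∧ min 2 (b0:ℕ) + 0 + 0 + min 1 (b3:ℕ) < 3) ∧ ((b0:ℕ) < 1 ∧ min 1 (b0:ℕ) + 0 + min 2 (b2:ℕ) + 0 < 3) ∧ ((b0:ℕ) < 1 ∧ min 1 (b0:ℕ) + min 2 (b1:ℕ) + 0 + 0 < 3)) → ((b3:ℕ) ≤ 1 ∨ (b3:ℕ) ≤ 0 ∨ (b3:ℕ) ≤ 0) →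
    ((b0:ℕ) = 1 ∧ (b1:ℕ) = 0 ∧ (b2:ℕ) = 1 ∧ (b3:ℕ) = 1) ∨
    ((b0:ℕ) = 1 ∧ (b1:ℕ) = 0 ∧ (b2:ℕ) = 2 ∧ (b3:ℕ) = 0) ∨
    ((b0:ℕ) = 1 ∧ (b1:ℕ) = 1 ∧ (b2:ℕ) = 0 ∧ (b3:ℕ) = 1) ∨
    ((b0:ℕ) = 1 ∧ (b1:ℕ) = 1 ∧ (b2:ℕ) = 1 ∧ (b3:ℕ) = 0) ∨
    ((b0:ℕ) = 1 ∧ (b1:ℕ) = 2 ∧ (b2:ℕ) = 0 ∧ (b3:ℕ) = 0) ∨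
    ((b0:ℕ) = 2 ∧ (b1:ℕ) = 0 ∧ (b2:ℕ) = 0 ∧ (b3:ℕ) = 1) ∨
    ((b0:ℕ) = 2 ∧ (b1:ℕ) = 0 ∧ (b2:ℕ) = 1 ∧ (b3:ℕ) = 0) ∨
    ((b0:ℕ) = 2 ∧ (b1:ℕ) = 1 ∧ (b2:ℕ) = 0 ∧ (b3:ℕ) = 0) := by decide

lemma candQ1 : ∀ b0 b1 b2 b3 : Fin 4,
    (b0:ℕ) + (b1:ℕ) + (b2:ℕ) + (b3:ℕ) = 3 → ¬(((b0:ℕ) < 2 ∧ min 2 (b0:ℕ) + 0 + 0 + min 1 (b3:ℕ) < 2) ∧ ((b0:ℕ) < 1 ∧ min 1 (b0:ℕ) + min 2 (b1:ℕ) + 0 + 0 < 2)) → ¬((b2:ℕ) < 3 ∧ 0 + 0 + min 3 (b2:ℕ) + 0 < 1) → ¬((b3:ℕ) < 1 ∧ min 2 (b0:ℕ) + 0 + 0 + min 1 (b3:ℕ) < 1) →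
    ((b0:ℕ) = 1 ∧ (b1:ℕ) = 0 ∧ (b2:ℕ) = 1 ∧ (b3:ℕ) = 1) ∨
    ((b0:ℕ) = 1 ∧ (b1:ℕ) = 0 ∧ (b2:ℕ) = 2 ∧ (b3:ℕ) = 0) ∨
    ((b0:ℕ) = 1 ∧ (b1:ℕ) = 1 ∧ (b2:ℕ) = 1 ∧ (b3:ℕ) = 0) ∨
    ((b0:ℕ) = 2 ∧ (b1:ℕ) = 0 ∧ (b2:ℕ) = 1 ∧ (b3:ℕ) = 0) := by decide

lemma candQ2 : ∀ b0 b1 b2 b3 : Fin 4,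
    (b0:ℕ) + (b1:ℕ) + (b2:ℕ) + (b3:ℕ) = 3 → ((b0:ℕ) ≤ 0 ∨ (b0:ℕ) ≤ 1 ∨ (b0:ℕ) ≤ 1) → ¬(((b0:ℕ) < 1 ∧ min 1 (b0:ℕ) + 0 + min 2 (b2:ℕ) + 0 < 2) ∧ ((b0:ℕ) < 1 ∧ min 1 (b0:ℕ) + min 2 (b1:ℕ) + 0 + 0 < 2)) → ¬((b1:ℕ) < 2 ∧ min 1 (b0:ℕ) + min 2 (b1:ℕ) + 0 + 0 < 1) → ¬((b2:ℕ) < 2 ∧ min 1 (b0:ℕ) + 0 + min 2 (b2:ℕ) + 0 < 1) → ¬((b3:ℕ) < 3 ∧ 0 + 0 + 0 + min 3 (b3:ℕ) < 1) →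
    ((b0:ℕ) = 1 ∧ (b1:ℕ) = 0 ∧ (b2:ℕ) = 0 ∧ (b3:ℕ) = 2) ∨
    ((b0:ℕ) = 1 ∧ (b1:ℕ) = 0 ∧ (b2:ℕ) = 1 ∧ (b3:ℕ) = 1) ∨
    ((b0:ℕ) = 1 ∧ (b1:ℕ) = 1 ∧ (b2:ℕ) = 0 ∧ (b3:ℕ) = 1) := by decide

lemma candQ3 : ∀ b0 b1 b2 b3 : Fin 4,
    (b0:ℕ) + (b1:ℕ) + (b2:ℕ) + (b3:ℕ) = 3 → ¬(((b0:ℕ) < 2 ∧ min 2 (b0:ℕ) + 0 + 0 + min 1 (b3:ℕ) < 2) ∧ ((b0:ℕ) < 1 ∧ min 1 (b0:ℕ) + 0 + min 2 (b2:ℕ) + 0 < 2)) → ¬((b1:ℕ) < 3 ∧ 0 + min 3 (b1:ℕ) + 0 + 0 < 1) → ¬((b3:ℕ) < 1 ∧ min 2 (b0:ℕ) + 0 + 0 + min 1 (b3:ℕ) < 1) →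
    ((b0:ℕ) = 1 ∧ (b1:ℕ) = 1 ∧ (b2:ℕ) = 0 ∧ (b3:ℕ) = 1) ∨
    ((b0:ℕ) = 1 ∧ (b1:ℕ) = 1 ∧ (b2:ℕ) = 1 ∧ (b3:ℕ) = 0) ∨
    ((b0:ℕ) = 1 ∧ (b1:ℕ) = 2 ∧ (b2:ℕ) = 0 ∧ (b3:ℕ) = 0) ∨
    ((b0:ℕ) = 2 ∧ (b1:ℕ) = 1 ∧ (b2:ℕ) = 0 ∧ (b3:ℕ) = 0) := by decide

/-- No mechanism for `n = 3` voters, `m = 4` alternatives, budget `b = 3` is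
simultaneously truthful, EJR+, and range-respecting. -/
theorem stmt10 :
    ¬ ∃ A : (Fin 3 → I43) → I43,
      -- truthful
      (∀ (P : Fin 3 → I43) (i : Fin 3) (q : I43),
        ∑ j, |((P i).1 j : ℤ) - ((A P).1 j : ℤ)| ≤
          ∑ j, |((P i).1 j : ℤ) - ((A (Function.update P i q)).1 j : ℤ)|) ∧
      -- EJR+
      (∀ P : Fin 3 → I43,
        ¬ ∃ (j : Fin 4) (ℓ : ℕ) (N' : Finset (Fin 3)),
          1 ≤ ℓ ∧ ℓ ≤ 3 ∧ ℓ ≤ N'.card ∧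
          ∀ i ∈ N', (A P).1 j < (P i).1 j ∧
            ∑ j', min ((P i).1 j') ((A P).1 j') < ℓ) ∧
      -- range-respecting
      (∀ (P : Fin 3 → I43) (j : Fin 4),
        (∃ i, (P i).1 j ≤ (A P).1 j) ∧ (∃ i, (A P).1 j ≤ (P i).1 j)) := by
  rintro ⟨A, hT, hE, hR⟩
  have E1 : ∀ (P : Fin 3 → I43) (j : Fin 4) (i : Fin 3),
      ¬((A P).1 j < (P i).1 j ∧ ∑ j', min ((P i).1 j') ((A P).1 j') < 1) := by
    rintro P j i ⟨h1, h2⟩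
    exact hE P ⟨j, 1, {i}, le_rfl, by norm_num, by simp, by
      intro k hk; rw [Finset.mem_singleton] at hk; subst hk; exact ⟨h1, h2⟩⟩
  have E2 : ∀ (P : Fin 3 → I43) (j : Fin 4) (i k : Fin 3), i ≠ k →
      ¬(((A P).1 j < (P i).1 j ∧ ∑ j', min ((P i).1 j') ((A P).1 j') < 2) ∧
        ((A P).1 j < (P k).1 j ∧ ∑ j', min ((P k).1 j') ((A P).1 j') < 2)) := by
    rintro P j i k hne ⟨hi, hk⟩
    refine hE P ⟨j, 2, {i, k}, by norm_num, by norm_num, ?_, ?_⟩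
    · rw [Finset.card_pair hne]
    · intro t ht
      rcases Finset.mem_insert.mp ht with h | h
      · subst h; exact hi
      · rw [Finset.mem_singleton] at h; subst h; exact hk
  have E3 : ∀ (P : Fin 3 → I43) (j : Fin 4),
      ¬(((A P).1 j < (P 0).1 j ∧ ∑ j', min ((P 0).1 j') ((A P).1 j') < 3) ∧
        ((A P).1 j < (P 1).1 j ∧ ∑ j', min ((P 1).1 j') ((A P).1 j') < 3) ∧
        ((A P).1 j < (P 2).1 j ∧ ∑ j', min ((P 2).1 j') ((A P).1 j') < 3)) := by
    rintro P j ⟨h0, h1, h2⟩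
    refine hE P ⟨j, 3, Finset.univ, by norm_num, le_rfl, by simp, ?_⟩
    intro t _
    fin_cases t
    exacts [h0, h1, h2]
  have hRD : ∀ (P : Fin 3 → I43) (j : Fin 4),
      ((P 0).1 j ≤ (A P).1 j ∨ (P 1).1 j ≤ (A P).1 j ∨ (P 2).1 j ≤ (A P).1 j) ∧
      ((A P).1 j ≤ (P 0).1 j ∨ (A P).1 j ≤ (P 1).1 j ∨ (A P).1 j ≤ (P 2).1 j) := by
    intro P j
    obtain ⟨⟨i1, h1⟩, ⟨i2, h2⟩⟩ := hR P j
    constructor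
    · fin_cases i1
      exacts [Or.inl h1, Or.inr (Or.inl h1), Or.inr (Or.inr h1)]
    · fin_cases i2
      exacts [Or.inl h2, Or.inr (Or.inl h2), Or.inr (Or.inr h2)]
  -- profile PB
  have sPB := (A PB).2
  have hPB_0 := (hRD PB 0).2
  have hPB_1 := E3 PB 0
  have hPB_2 := (hRD PB 3).2
  simp only [PB_0, PB_1, PB_2, Q1_0, Q1_1, Q1_2, Q2_0, Q2_1, Q2_2, Q3_0, Q3_1, Q3_2, mk4_0, mk4_1, mk4_2, mk4_3, Fin.sum_univ_four, Matrix.cons_val_zero, Matrix.cons_val_one, Matrix.head_cons, Matrix.cons_val_two, Matrix.tail_cons, Matrix.cons_val_three, Matrix.head_fin_const, Nat.min_self, Nat.zero_min, Nat.min_zero] at sPB hPB_0 hPB_1 hPB_2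
  have cPB := candPB ⟨(A PB).1 0, by omega⟩ ⟨(A PB).1 1, by omega⟩ ⟨(A PB).1 2, by omega⟩ ⟨(A PB).1 3, by omega⟩ (by simp only [fval]; omega) (by simp only [fval]; omega) (by simp only [fval]; omega) (by simp only [fval]; omega)
  simp only [fval] at cPB
  clear hPB_0 hPB_1 hPB_2
  -- profile Q1
  have sQ1 := (A Q1).2
  have hQ1_0 := E2 Q1 0 0 2 (by decide)
  have hQ1_1 := E1 Q1 2 1
  have hQ1_2 := E1 Q1 3 0
  simp only [PB_0, PB_1, PB_2, Q1_0, Q1_1, Q1_2, Q2_0, Q2_1, Q2_2, Q3_0, Q3_1, Q3_2, mk4_0, mk4_1, mk4_2, mk4_3, Fin.sum_univ_four, Matrix.cons_val_zero, Matrix.cons_val_one, Matrix.head_cons, Matrix.cons_val_two, Matrix.tail_cons, Matrix.cons_val_three, Matrix.head_fin_const, Nat.min_self, Nat.zero_min, Nat.min_zero] at sQ1 hQ1_0 hQ1_1 hQ1_2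
  have cQ1 := candQ1 ⟨(A Q1).1 0, by omega⟩ ⟨(A Q1).1 1, by omega⟩ ⟨(A Q1).1 2, by omega⟩ ⟨(A Q1).1 3, by omega⟩ (by simp only [fval]; omega) (by simp only [fval]; omega) (by simp only [fval]; omega) (by simp only [fval]; omega)
  simp only [fval] at cQ1
  clear hQ1_0 hQ1_1 hQ1_2
  -- profile Q2
  have sQ2 := (A Q2).2
  have hQ2_0 := (hRD Q2 0).2
  have hQ2_1 := E2 Q2 0 1 2 (by decide)
  have hQ2_2 := E1 Q2 1 2
  have hQ2_3 := E1 Q2 2 1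
  have hQ2_4 := E1 Q2 3 0
  simp only [PB_0, PB_1, PB_2, Q1_0, Q1_1, Q1_2, Q2_0, Q2_1, Q2_2, Q3_0, Q3_1, Q3_2, mk4_0, mk4_1, mk4_2, mk4_3, Fin.sum_univ_four, Matrix.cons_val_zero, Matrix.cons_val_one, Matrix.head_cons, Matrix.cons_val_two, Matrix.tail_cons, Matrix.cons_val_three, Matrix.head_fin_const, Nat.min_self, Nat.zero_min, Nat.min_zero] at sQ2 hQ2_0 hQ2_1 hQ2_2 hQ2_3 hQ2_4
  have cQ2 := candQ2 ⟨(A Q2).1 0, by omega⟩ ⟨(A Q2).1 1, by omega⟩ ⟨(A Q2).1 2, by omega⟩ ⟨(A Q2).1 3, by omega⟩ (by simp only [fval]; omega) (by simp only [fval]; omega) (by simp only [fval]; omega) (by simp only [fval]; omega) (by simp only [fval]; omega) (by simp only [fval]; omega)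
  simp only [fval] at cQ2
  clear hQ2_0 hQ2_1 hQ2_2 hQ2_3 hQ2_4
  -- profile Q3
  have sQ3 := (A Q3).2
  have hQ3_0 := E2 Q3 0 0 1 (by decide)
  have hQ3_1 := E1 Q3 1 2
  have hQ3_2 := E1 Q3 3 0
  simp only [PB_0, PB_1, PB_2, Q1_0, Q1_1, Q1_2, Q2_0, Q2_1, Q2_2, Q3_0, Q3_1, Q3_2, mk4_0, mk4_1, mk4_2, mk4_3, Fin.sum_univ_four, Matrix.cons_val_zero, Matrix.cons_val_one, Matrix.head_cons, Matrix.cons_val_two, Matrix.tail_cons, Matrix.cons_val_three, Matrix.head_fin_const, Nat.min_self, Nat.zero_min, Nat.min_zero] at sQ3 hQ3_0 hQ3_1 hQ3_2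
  have cQ3 := candQ3 ⟨(A Q3).1 0, by omega⟩ ⟨(A Q3).1 1, by omega⟩ ⟨(A Q3).1 2, by omega⟩ ⟨(A Q3).1 3, by omega⟩ (by simp only [fval]; omega) (by simp only [fval]; omega) (by simp only [fval]; omega) (by simp only [fval]; omega)
  simp only [fval] at cQ3
  clear hQ3_0 hQ3_1 hQ3_2
  have t1a := hT PB 1 (mk4 0 0 3 0 rfl)
  rw [show Function.update PB 1 (mk4 0 0 3 0 rfl) = Q1 from by funext x; fin_cases x <;> rfl, l1_ov, l1_ov] at t1a
  have t1b := hT Q1 1 (mk4 1 0 2 0 rfl)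
  rw [show Function.update Q1 1 (mk4 1 0 2 0 rfl) = PB from by funext x; fin_cases x <;> rfl, l1_ov, l1_ov] at t1b
  simp only [PB_0, PB_1, PB_2, Q1_0, Q1_1, Q1_2, Q2_0, Q2_1, Q2_2, Q3_0, Q3_1, Q3_2, mk4_0, mk4_1, mk4_2, mk4_3, Fin.sum_univ_four, Matrix.cons_val_zero, Matrix.cons_val_one, Matrix.head_cons, Matrix.cons_val_two, Matrix.tail_cons, Matrix.cons_val_three, Matrix.head_fin_const, Nat.min_self, Nat.zero_min, Nat.min_zero] at t1a t1b
  push_cast at t1a t1b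
  have t2a := hT PB 0 (mk4 0 0 0 3 rfl)
  rw [show Function.update PB 0 (mk4 0 0 0 3 rfl) = Q2 from by funext x; fin_cases x <;> rfl, l1_ov, l1_ov] at t2a
  have t2b := hT Q2 0 (mk4 2 0 0 1 rfl)
  rw [show Function.update Q2 0 (mk4 2 0 0 1 rfl) = PB from by funext x; fin_cases x <;> rfl, l1_ov, l1_ov] at t2b
  simp only [PB_0, PB_1, PB_2, Q1_0, Q1_1, Q1_2, Q2_0, Q2_1, Q2_2, Q3_0, Q3_1, Q3_2, mk4_0, mk4_1, mk4_2, mk4_3, Fin.sum_univ_four, Matrix.cons_val_zero, Matrix.cons_val_one, Matrix.head_cons, Matrix.cons_val_two, Matrix.tail_cons, Matrix.cons_val_three, Matrix.head_fin_const, Nat.min_self, Nat.zero_min, Nat.min_zero] at t2a t2b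
  push_cast at t2a t2b
  have t3a := hT PB 2 (mk4 0 3 0 0 rfl)
  rw [show Function.update PB 2 (mk4 0 3 0 0 rfl) = Q3 from by funext x; fin_cases x <;> rfl, l1_ov, l1_ov] at t3a
  have t3b := hT Q3 2 (mk4 1 2 0 0 rfl)
  rw [show Function.update Q3 2 (mk4 1 2 0 0 rfl) = PB from by funext x; fin_cases x <;> rfl, l1_ov, l1_ov] at t3b
  simp only [PB_0, PB_1, PB_2, Q1_0, Q1_1, Q1_2, Q2_0, Q2_1, Q2_2, Q3_0, Q3_1, Q3_2, mk4_0, mk4_1, mk4_2, mk4_3, Fin.sum_univ_four, Matrix.cons_val_zero, Matrix.cons_val_one, Matrix.head_cons, Matrix.cons_val_two, Matrix.tail_cons, Matrix.cons_val_three, Matrix.head_fin_const, Nat.min_self, Nat.zero_min, Nat.min_zero] at t3a t3b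
  push_cast at t3a t3b
  clear hT hE hR E1 E2 E3 hRD
  rcases cPB with h|h|h|h|h|h|h|h
  · clear cQ1 cQ2 t1a t1b t2a t2b
    obtain ⟨p0, p1, p2, p3⟩ := h
    rcases cQ3 with g|g|g|g <;> omega
  · clear cQ1 cQ3 t1a t1b t3a t3b
    obtain ⟨p0, p1, p2, p3⟩ := h
    rcases cQ2 with g|g|g <;> omega
  · clear cQ2 cQ3 t2a t2b t3a t3b
    obtain ⟨p0, p1, p2, p3⟩ := h
    rcases cQ1 with g|g|g|g <;> omega
  · clear cQ1 cQ3 t1a t1b t3a t3b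
    obtain ⟨p0, p1, p2, p3⟩ := h
    rcases cQ2 with g|g|g <;> omega
  · clear cQ1 cQ3 t1a t1b t3a t3b
    obtain ⟨p0, p1, p2, p3⟩ := h
    rcases cQ2 with g|g|g <;> omega
  · clear cQ2 cQ3 t2a t2b t3a t3b
    obtain ⟨p0, p1, p2, p3⟩ := h
    rcases cQ1 with g|g|g|g <;> omega
  · clear cQ1 cQ2 t1a t1b t2a t2b
    obtain ⟨p0, p1, p2, p3⟩ := h
    rcases cQ3 with g|g|g|g <;> omega
  · clear cQ2 cQ3 t2a t2b t3a t3b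
    obtain ⟨p0, p1, p2, p3⟩ := h
    rcases cQ1 with g|g|g|g <;> omega
end

section
/- For the profile P* = ((0,3,0,0),(1,0,2,0),(1,0,0,2)) with n=3, m=4, b=3, any allocation a ∈ I^4_3 providing EJR+ must satisfy a_1 ≥ 1 and a_2 ≥ 1. -/
/-- For the profile `P* = ((0,3,0,0),(1,0,2,0),(1,0,0,2))` with `n = 3`, `m = 4`,
`b = 3`, any allocation providing EJR+ allocates at least 1 to each of the first
two alternatives. -/
theorem stmt11 (p : Fin 3 → Fin 4 → ℕ)
    (hp : p = ![![0,3,0,0], ![1,0,2,0], ![1,0,0,2]])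
    (a : Fin 4 → ℕ) (ha : ∑ j, a j = 3)
    (hEJR : ¬ ∃ (j : Fin 4) (ℓ : ℕ) (N' : Finset (Fin 3)),
      1 ≤ ℓ ∧ ℓ ≤ 3 ∧ ℓ ≤ N'.card ∧
      ∀ i ∈ N', a j < p i j ∧ ∑ j', min (p i j') (a j') < ℓ) :
    1 ≤ a 0 ∧ 1 ≤ a 1 := by
  subst hp
  rw [Fin.sum_univ_four] at ha
  have h1 : 1 ≤ a 1 := by
    by_contra h
    apply hEJR
    refine ⟨1, 1, {0}, le_refl 1, by norm_num, by simp, ?_⟩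
    intro i hi
    simp only [Finset.mem_singleton] at hi
    subst hi
    refine ⟨by simp; omega, ?_⟩
    rw [Fin.sum_univ_four]
    simp
    omega
  refine ⟨?_, h1⟩
  by_contra h0
  have h0' : a 0 = 0 := by omega
  rcases le_or_gt (a 2) 1 with h2 | h2
  · rcases le_or_gt (a 3) 1 with h3 | h3
    · apply hEJR
      refine ⟨0, 2, {1, 2}, by norm_num, by norm_num, by simp, ?_⟩
      intro i hi
      fin_cases hi <;>
        refine ⟨by simp [h0', Matrix.vecHead, Matrix.vecTail], ?_⟩ <;>
        · rw [Fin.sum_univ_four]; simp [h0', Matrix.vecHead, Matrix.vecTail]; omega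
    · -- a 3 ≥ 2 ⇒ a 2 = 0
      apply hEJR
      refine ⟨0, 1, {1}, le_refl 1, by norm_num, by simp, ?_⟩
      intro i hi
      simp only [Finset.mem_singleton] at hi
      subst hi
      refine ⟨by simp [h0', Matrix.vecHead, Matrix.vecTail], ?_⟩
      rw [Fin.sum_univ_four]
      simp [h0', Matrix.vecHead, Matrix.vecTail]
      omega
  · -- a 2 ≥ 2 ⇒ a 3 = 0
    apply hEJR
    refine ⟨0, 1, {2}, le_refl 1, by norm_num, by simp, ?_⟩
    intro i hi
    simp only [Finset.mem_singleton] at hi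
    subst hi
    refine ⟨by simp [h0', Matrix.vecHead, Matrix.vecTail], ?_⟩
    rw [Fin.sum_univ_four]
    simp [h0', Matrix.vecHead, Matrix.vecTail]
    omega
end

section
/- If a fractional-input budget-aggregation mechanism A : (S^m_b)^n → I^m_b is onto and truthful, then it is unanimous: whenever every voter's vote strictly prefers (in ℓ1 distance) a fixed integral allocation a over every other integral allocation, A outputs a. -/
/-- The simplex of fractional budget-`b` allocations over `m` alternatives. -/
def Sm (m b : ℕ) : Type :=
  {v : Fin m → ℝ // (∀ j, 0 ≤ v j ∧ v j ≤ b) ∧ ∑ j, v j = b}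

/-- Integral budget-`b` allocations over `m` alternatives. -/
def Im (m b : ℕ) : Type := {v : Fin m → ℕ // ∑ j, v j = b}

/-- ℓ1 distance between a fractional vote and an integral allocation. -/
noncomputable def dSI {m b : ℕ} (p : Sm m b) (a : Im m b) : ℝ :=
  ∑ j, |p.1 j - (a.1 j : ℝ)|

/-- Any onto and truthful fractional-input mechanism is unanimous: if every
voter's vote strictly prefers a fixed integral allocation `a` to every other
integral allocation, the mechanism outputs `a`. -/
theorem stmt13 (n m b : ℕ) (hn : 0 < n) (hm : 2 ≤ m) (hb : 0 < b)
    (A : (Fin n → Sm m b) → Im m b)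
    (honto : ∀ a : Im m b, ∃ P, A P = a)
    (htruth : ∀ (P : Fin n → Sm m b) (i : Fin n) (q : Sm m b),
      dSI (P i) (A P) ≤ dSI (P i) (A (Function.update P i q))) :
    ∀ (a : Im m b) (P : Fin n → Sm m b),
      (∀ i, ∀ a' : Im m b, a' ≠ a → dSI (P i) a < dSI (P i) a') →
      A P = a := by
  intro a P hpref
  obtain ⟨P0, hP0⟩ := honto a
  set Q : ℕ → (Fin n → Sm m b) := fun k i => if i.val < k then P i else P0 i with hQ
  have key : ∀ k, k ≤ n → A (Q k) = a := by
    intro k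
    induction k with
    | zero =>
      intro _
      have : Q 0 = P0 := by funext j; simp [hQ]
      rw [this, hP0]
    | succ k ih =>
      intro hk
      have hkn : k < n := hk
      have ihk := ih (le_of_lt hkn)
      set i : Fin n := ⟨k, hkn⟩ with hi
      have h1 : Function.update (Q (k+1)) i (P0 i) = Q k := by
        funext j
        rw [Function.update_apply]
        by_cases hj : j = i
        · subst hj
          simp [hQ, hi]
        · simp only [hj, if_false]
          have hjk : j.val ≠ k := fun h => hj (Fin.ext h)
          simp only [hQ]
          rcases lt_trichotomy j.val k with h | h | h
          · simp [h, Nat.lt_succ_of_lt h]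
          · exact absurd h hjk
          · have h1 : ¬ j.val < k := not_lt.mpr (le_of_lt h)
            have h2 : ¬ j.val < k + 1 := not_lt.mpr h
            simp [h1, h2]
      have ht := htruth (Q (k+1)) i (P0 i)
      rw [h1, ihk] at ht
      have hQi : Q (k+1) i = P i := by simp [hQ, hi]
      rw [hQi] at ht
      by_contra hne
      exact absurd ht (not_le.mpr (hpref i _ hne))
  have hQn : Q n = P := by
    funext j
    simp [hQ, j.isLt]
  rw [← hQn]
  exact key n le_rfl
end
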